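/- arXiv:1011.0277 — 2 statements merged into one kernel-verified Lean document; each statement's English description precedes it below -/
import Mathlib

section
/- The determining equation D̂ₜη̌ = D̂ₓ^ρĤ holds identically on an open set Ω ⊆ ℝ^{2+ρ} if and only if the Lie bracket [D̂ₜ, D̂ₓ] vanishes identically on Ω, i.e., if and only if the system of vector fields {D̂ₜ, D̂ₓ} is in involution (the two vector fields commute) on Ω. -/
noncomputable section

/-- Partial derivative with respect to `t`. -/
def pT (ρ : ℕ) (g : ℝ × ℝ × (Fin ρ → ℝ) → ℝ) (p : ℝ × ℝ × (Fin ρ → ℝ)) : ℝ :=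
  deriv (fun s => g (s, p.2)) p.1

/-- Partial derivative with respect to `x`. -/
def pX (ρ : ℕ) (g : ℝ × ℝ × (Fin ρ → ℝ) → ℝ) (p : ℝ × ℝ × (Fin ρ → ℝ)) : ℝ :=
  deriv (fun s => g (p.1, s, p.2.2)) p.2.1

/-- Partial derivative with respect to the coordinate `v^a`. -/
def pV (ρ : ℕ) (a : Fin ρ) (g : ℝ × ℝ × (Fin ρ → ℝ) → ℝ) (p : ℝ × ℝ × (Fin ρ → ℝ)) : ℝ :=
  deriv (fun s => g (p.1, p.2.1, Function.update p.2.2 a s)) (p.2.2 a)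

/-- The coefficient of `∂_{v^a}` in the vector field `D̂ₓ`:
`v^{a+1}` for `a < ρ - 1` and `η̌` for `a = ρ - 1`. -/
def dxCoeff (ρ : ℕ) (η : ℝ × ℝ × (Fin ρ → ℝ) → ℝ) (p : ℝ × ℝ × (Fin ρ → ℝ)) (a : Fin ρ) : ℝ :=
  if h : (a : ℕ) + 1 < ρ then p.2.2 ⟨(a : ℕ) + 1, h⟩ else η p

/-- The restricted total derivative `D̂ₓ` acting on functions of `(t, x, v⁰, …, v^{ρ-1})`. -/
def DX (ρ : ℕ) (η g : ℝ × ℝ × (Fin ρ → ℝ) → ℝ) : ℝ × ℝ × (Fin ρ → ℝ) → ℝ :=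
  fun p => pX ρ g p + ∑ a : Fin ρ, dxCoeff ρ η p a * pV ρ a g p

/-- `Ĥ(t,x,v⁰,…,v^{ρ-1})`: the right-hand side `H` with `u_i` replaced by `v^i` for `i < ρ`
and by `D̂ₓ^{i-ρ} η̌` for `i ≥ ρ`.  This covers both cases `ρ > r` and `ρ ≤ r`. -/
def Hhat (ρ r : ℕ) (H : ℝ × ℝ × (Fin (r + 1) → ℝ) → ℝ)
    (η : ℝ × ℝ × (Fin ρ → ℝ) → ℝ) : ℝ × ℝ × (Fin ρ → ℝ) → ℝ :=
  fun p => H (p.1, p.2.1, fun i =>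
    if h : (i : ℕ) < ρ then p.2.2 ⟨(i : ℕ), h⟩ else (DX ρ η)^[(i : ℕ) - ρ] η p)

/-- The restricted total derivative `D̂ₜ` acting on functions of `(t, x, v⁰, …, v^{ρ-1})`. -/
def DT (ρ r : ℕ) (H : ℝ × ℝ × (Fin (r + 1) → ℝ) → ℝ)
    (η g : ℝ × ℝ × (Fin ρ → ℝ) → ℝ) : ℝ × ℝ × (Fin ρ → ℝ) → ℝ :=
  fun p => pT ρ g p + ∑ b : Fin ρ, (DX ρ η)^[(b : ℕ)] (Hhat ρ r H η) p * pV ρ b g p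

/-- The vector field `D̂ₓ` on `ℝ^{2+ρ}`, with components `(0, 1, v¹, …, v^{ρ-1}, η̌)`. -/
def DxVF (ρ : ℕ) (η : ℝ × ℝ × (Fin ρ → ℝ) → ℝ) :
    ℝ × ℝ × (Fin ρ → ℝ) → ℝ × ℝ × (Fin ρ → ℝ) :=
  fun p => (0, 1, fun a => dxCoeff ρ η p a)

/-- The vector field `D̂ₜ` on `ℝ^{2+ρ}`, with components `(1, 0, Ĥ, D̂ₓĤ, …, D̂ₓ^{ρ-1}Ĥ)`. -/
def DtVF (ρ r : ℕ) (H : ℝ × ℝ × (Fin (r + 1) → ℝ) → ℝ)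
    (η : ℝ × ℝ × (Fin ρ → ℝ) → ℝ) : ℝ × ℝ × (Fin ρ → ℝ) → ℝ × ℝ × (Fin ρ → ℝ) :=
  fun p => (1, 0, fun b => (DX ρ η)^[(b : ℕ)] (Hhat ρ r H η) p)

/-- The Lie bracket `[X,Y](p) = DY(p)·X(p) − DX(p)·Y(p)` of vector fields on `ℝ^{2+ρ}`. -/
def lieBracket (ρ : ℕ)
    (X Y : ℝ × ℝ × (Fin ρ → ℝ) → ℝ × ℝ × (Fin ρ → ℝ))
    (p : ℝ × ℝ × (Fin ρ → ℝ)) : ℝ × ℝ × (Fin ρ → ℝ) :=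
  fderiv ℝ Y p (X p) - fderiv ℝ X p (Y p)

section Aux

abbrev Ey (ρ : ℕ) := ℝ × ℝ × (Fin ρ → ℝ)

variable {ρ r : ℕ} {η : Ey ρ → ℝ}


lemma pT_eq {g : Ey ρ → ℝ} {p : Ey ρ} (hg : DifferentiableAt ℝ g p) :
    fderiv ℝ g p (1, 0, 0) = pT ρ g p := by
  have h1 : HasDerivAt (fun s : ℝ => ((s, p.2) : Ey ρ)) (1, 0, 0) p.1 :=
    (hasDerivAt_id p.1).prodMk (hasDerivAt_const _ _)
  exact (hg.hasFDerivAt.comp_hasDerivAt p.1 h1).deriv.symm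

lemma pX_eq {g : Ey ρ → ℝ} {p : Ey ρ} (hg : DifferentiableAt ℝ g p) :
    fderiv ℝ g p (0, 1, 0) = pX ρ g p := by
  have h1 : HasDerivAt (fun s : ℝ => ((p.1, s, p.2.2) : Ey ρ)) (0, 1, 0) p.2.1 :=
    (hasDerivAt_const _ _).prodMk ((hasDerivAt_id _).prodMk (hasDerivAt_const _ _))
  exact (hg.hasFDerivAt.comp_hasDerivAt p.2.1 h1).deriv.symm

lemma pV_eq {g : Ey ρ → ℝ} {p : Ey ρ} (hg : DifferentiableAt ℝ g p) (a : Fin ρ) :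
    fderiv ℝ g p (0, 0, Pi.single a 1) = pV ρ a g p := by
  have h1 : HasDerivAt (fun s : ℝ => ((p.1, p.2.1, Function.update p.2.2 a s) : Ey ρ))
      (0, 0, Pi.single a 1) (p.2.2 a) :=
    (hasDerivAt_const _ _).prodMk ((hasDerivAt_const _ _).prodMk (hasDerivAt_update p.2.2 a _))
  have hg' : HasFDerivAt g (fderiv ℝ g p) (p.1, p.2.1, Function.update p.2.2 a (p.2.2 a)) := by
    rw [Function.update_eq_self]; exact hg.hasFDerivAt
  exact (hg'.comp_hasDerivAt (p.2.2 a) h1).deriv.symm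

lemma fderiv_decomp {g : Ey ρ → ℝ} {p : Ey ρ} (hg : DifferentiableAt ℝ g p)
    (t0 x0 : ℝ) (c : Fin ρ → ℝ) :
    fderiv ℝ g p (t0, x0, c)
      = t0 * pT ρ g p + x0 * pX ρ g p + ∑ a : Fin ρ, c a * pV ρ a g p := by
  have hv : ((t0, x0, c) : Ey ρ)
      = t0 • ((1:ℝ), (0:ℝ), (0 : Fin ρ → ℝ)) + x0 • ((0:ℝ), (1:ℝ), (0 : Fin ρ → ℝ))
        + ∑ a : Fin ρ, c a • (((0:ℝ), (0:ℝ), Pi.single a (1:ℝ)) : Ey ρ) := by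
    refine Prod.ext ?_ (Prod.ext ?_ ?_)
    · simp [Prod.fst_sum]
    · simp [Prod.fst_sum, Prod.snd_sum]
    · funext j
      simp [Prod.fst_sum, Prod.snd_sum, Finset.sum_apply, Pi.single_apply]
  rw [hv, map_add, map_add, map_smul, map_smul, map_sum]
  rw [pT_eq hg, pX_eq hg]
  simp only [map_smul, smul_eq_mul, pV_eq hg]

lemma DX_apply {g : Ey ρ → ℝ} {p : Ey ρ} (hg : DifferentiableAt ℝ g p) :
    fderiv ℝ g p (DxVF ρ η p) = DX ρ η g p := by
  rw [show DxVF ρ η p = ((0:ℝ), (1:ℝ), fun a => dxCoeff ρ η p a) from rfl,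
    fderiv_decomp hg]
  simp [DX]

lemma DT_apply {g : Ey ρ → ℝ} {p : Ey ρ}
    (hg : DifferentiableAt ℝ g p) (HH : Ey r.succ → ℝ) :
    fderiv ℝ g p (DtVF ρ r HH η p) = DT ρ r HH η g p := by
  rw [show DtVF ρ r HH η p
      = ((1:ℝ), (0:ℝ), fun b : Fin ρ => (DX ρ η)^[(b:ℕ)] (Hhat ρ r HH η) p) from rfl,
    fderiv_decomp hg]
  simp [DT]

lemma contDiff_coord (j : Fin ρ) : ContDiff ℝ (⊤ : ℕ∞) (fun p : Ey ρ => p.2.2 j) :=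
  (contDiff_pi.1 (contDiff_snd.comp contDiff_snd)) j

lemma contDiff_dxCoeff (hη : ContDiff ℝ (⊤ : ℕ∞) η) (a : Fin ρ) :
    ContDiff ℝ (⊤ : ℕ∞) (fun p => dxCoeff ρ η p a) := by
  unfold dxCoeff
  rcases Nat.lt_or_ge ((a : ℕ) + 1) ρ with h | h
  · simp only [dif_pos h]; exact contDiff_coord _
  · simp only [dif_neg (not_lt.2 h)]; exact hη

lemma contDiff_DxVF (hη : ContDiff ℝ (⊤ : ℕ∞) η) : ContDiff ℝ (⊤ : ℕ∞) (DxVF ρ η) :=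
  contDiff_const.prodMk (contDiff_const.prodMk (contDiff_pi.2 fun a => contDiff_dxCoeff hη a))

lemma contDiff_DX (hη : ContDiff ℝ (⊤ : ℕ∞) η) {g : Ey ρ → ℝ} (hg : ContDiff ℝ (⊤ : ℕ∞) g) :
    ContDiff ℝ (⊤ : ℕ∞) (DX ρ η g) := by
  have he : DX ρ η g = fun p => fderiv ℝ g p (DxVF ρ η p) :=
    funext fun p => (DX_apply ((hg.differentiable (by simp)) p)).symm
  rw [he]
  exact (hg.fderiv_right (by simp)).clm_apply (contDiff_DxVF hη)

lemma contDiff_DXiter (hη : ContDiff ℝ (⊤ : ℕ∞) η) {g : Ey ρ → ℝ} (hg : ContDiff ℝ (⊤ : ℕ∞) g) (n : ℕ) :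
    ContDiff ℝ (⊤ : ℕ∞) ((DX ρ η)^[n] g) := by
  induction n with
  | zero => exact hg
  | succ n ih => rw [Function.iterate_succ_apply']; exact contDiff_DX hη ih

lemma contDiff_Hhat {HH : Ey r.succ → ℝ} (hH : ContDiff ℝ (⊤ : ℕ∞) HH) (hη : ContDiff ℝ (⊤ : ℕ∞) η) :
    ContDiff ℝ (⊤ : ℕ∞) (Hhat ρ r HH η) := by
  apply hH.comp
  refine contDiff_fst.prodMk (((contDiff_fst.comp contDiff_snd)).prodMk (contDiff_pi.2 fun i => ?_))
  rcases Nat.lt_or_ge (i : ℕ) ρ with h | h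
  · simp only [dif_pos h]; exact contDiff_coord _
  · simp only [dif_neg (not_lt.2 h)]; exact contDiff_DXiter hη hη _

lemma contDiff_DtVF {HH : Ey r.succ → ℝ} (hH : ContDiff ℝ (⊤ : ℕ∞) HH) (hη : ContDiff ℝ (⊤ : ℕ∞) η) :
    ContDiff ℝ (⊤ : ℕ∞) (DtVF ρ r HH η) :=
  contDiff_const.prodMk (contDiff_const.prodMk
    (contDiff_pi.2 fun b => contDiff_DXiter hη (contDiff_Hhat hH hη) (b : ℕ)))

lemma fderiv_comp_clm {f : Ey ρ → Ey ρ} {p : Ey ρ} (hf : DifferentiableAt ℝ f p)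
    (L : Ey ρ →L[ℝ] ℝ) (w : Ey ρ) :
    L (fderiv ℝ f p w) = fderiv ℝ (fun q => L (f q)) p w := by
  have h := (L.hasFDerivAt.comp p hf.hasFDerivAt).fderiv
  calc L (fderiv ℝ f p w) = (L.comp (fderiv ℝ f p)) w := rfl
    _ = fderiv ℝ (⇑L ∘ f) p w := by rw [h]
    _ = fderiv ℝ (fun q => L (f q)) p w := rfl

def Lt (ρ : ℕ) : Ey ρ →L[ℝ] ℝ := ContinuousLinearMap.fst ℝ ℝ (ℝ × (Fin ρ → ℝ))
def Lx (ρ : ℕ) : Ey ρ →L[ℝ] ℝ :=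
  (ContinuousLinearMap.fst ℝ ℝ (Fin ρ → ℝ)).comp (ContinuousLinearMap.snd ℝ ℝ (ℝ × (Fin ρ → ℝ)))
def Lv (ρ : ℕ) (a : Fin ρ) : Ey ρ →L[ℝ] ℝ :=
  (ContinuousLinearMap.proj a).comp
    ((ContinuousLinearMap.snd ℝ ℝ (Fin ρ → ℝ)).comp (ContinuousLinearMap.snd ℝ ℝ (ℝ × (Fin ρ → ℝ))))

lemma DT_coord (HH : Ey r.succ → ℝ) (j : Fin ρ) (p : Ey ρ) :
    DT ρ r HH η (fun q => q.2.2 j) p = (DX ρ η)^[(j:ℕ)] (Hhat ρ r HH η) p := by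
  have h1 : ∀ b : Fin ρ, pV ρ b (fun q => q.2.2 j) p = if b = j then 1 else 0 := by
    intro b
    by_cases hbj : b = j
    · subst hbj
      simp [pV, Function.update_self]
    · simp [pV, Function.update_of_ne (Ne.symm hbj), hbj]
  have h0 : pT ρ (fun q => q.2.2 j) p = 0 := by simp [pT]
  simp [DT, h0, h1, Finset.sum_ite_eq']

lemma bracket_eq (HH : Ey r.succ → ℝ) (hH : ContDiff ℝ (⊤ : ℕ∞) HH) (hη : ContDiff ℝ (⊤ : ℕ∞) η) (p : Ey ρ) :
    lieBracket ρ (DtVF ρ r HH η) (DxVF ρ η) p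
      = (0, 0, fun a : Fin ρ => if (a:ℕ)+1 < ρ then 0
          else DT ρ r HH η η p - (DX ρ η)^[ρ] (Hhat ρ r HH η) p) := by
  have hX : DifferentiableAt ℝ (DtVF ρ r HH η) p :=
    ((contDiff_DtVF hH hη).differentiable (by simp)) p
  have hY : DifferentiableAt ℝ (DxVF ρ η) p :=
    ((contDiff_DxVF hη).differentiable (by simp)) p
  unfold lieBracket
  refine Prod.ext ?_ (Prod.ext ?_ ?_)
  · show Lt ρ (fderiv ℝ (DxVF ρ η) p (DtVF ρ r HH η p))
        - Lt ρ (fderiv ℝ (DtVF ρ r HH η) p (DxVF ρ η p)) = 0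
    rw [fderiv_comp_clm hY, fderiv_comp_clm hX]
    have e1 : (fun q => Lt ρ (DxVF ρ η q)) = fun _ : Ey ρ => (0:ℝ) := rfl
    have e2 : (fun q => Lt ρ (DtVF ρ r HH η q)) = fun _ : Ey ρ => (1:ℝ) := rfl
    rw [e1, e2]
    simp
  · show Lx ρ (fderiv ℝ (DxVF ρ η) p (DtVF ρ r HH η p))
        - Lx ρ (fderiv ℝ (DtVF ρ r HH η) p (DxVF ρ η p)) = 0
    rw [fderiv_comp_clm hY, fderiv_comp_clm hX]
    have e1 : (fun q => Lx ρ (DxVF ρ η q)) = fun _ : Ey ρ => (1:ℝ) := rfl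
    have e2 : (fun q => Lx ρ (DtVF ρ r HH η q)) = fun _ : Ey ρ => (0:ℝ) := rfl
    rw [e1, e2]
    simp
  · funext a
    show Lv ρ a (fderiv ℝ (DxVF ρ η) p (DtVF ρ r HH η p))
        - Lv ρ a (fderiv ℝ (DtVF ρ r HH η) p (DxVF ρ η p)) = _
    rw [fderiv_comp_clm hY, fderiv_comp_clm hX]
    have e1 : (fun q => Lv ρ a (DxVF ρ η q)) = fun q => dxCoeff ρ η q a := rfl
    have e2 : (fun q => Lv ρ a (DtVF ρ r HH η q))
        = (DX ρ η)^[(a:ℕ)] (Hhat ρ r HH η) := rfl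
    rw [e1, e2]
    have hd1 : DifferentiableAt ℝ (fun q => dxCoeff ρ η q a) p :=
      ((contDiff_dxCoeff hη a).differentiable (by simp)) p
    have hd2 : DifferentiableAt ℝ ((DX ρ η)^[(a:ℕ)] (Hhat ρ r HH η)) p :=
      ((contDiff_DXiter hη (contDiff_Hhat hH hη) (a:ℕ)).differentiable (by simp)) p
    rw [DT_apply hd1 HH, DX_apply hd2]
    have hsucc : DX ρ η ((DX ρ η)^[(a:ℕ)] (Hhat ρ r HH η)) p
        = (DX ρ η)^[(a:ℕ)+1] (Hhat ρ r HH η) p := by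
      rw [Function.iterate_succ_apply']
    rw [hsucc]
    by_cases h : (a:ℕ) + 1 < ρ
    · have ec : (fun q : Ey ρ => dxCoeff ρ η q a) = fun q => q.2.2 ⟨(a:ℕ)+1, h⟩ := by
        funext q; simp [dxCoeff, dif_pos h]
      rw [ec, DT_coord HH ⟨(a:ℕ)+1, h⟩ p]
      simp [h]
    · have hρa : (a:ℕ) + 1 = ρ := le_antisymm a.isLt (not_lt.1 h)
      have ec : (fun q : Ey ρ => dxCoeff ρ η q a) = η := by
        funext q; simp [dxCoeff, dif_neg h]
      rw [ec, hρa]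
      simp [h]

end Aux

/-- the determining equation `D̂ₜη̌ = D̂ₓ^ρĤ` holds identically on an open set
`Ω` if and only if the Lie bracket `[D̂ₜ, D̂ₓ]` vanishes identically on `Ω`
(i.e. the vector fields `D̂ₜ`, `D̂ₓ` commute on `Ω`). -/
theorem determining_iff_involution (ρ r : ℕ) (hρ : 1 ≤ ρ) (hr : 1 ≤ r)
    (H : ℝ × ℝ × (Fin (r + 1) → ℝ) → ℝ) (hH : ContDiff ℝ (⊤ : ℕ∞) H)
    (η : ℝ × ℝ × (Fin ρ → ℝ) → ℝ) (hη : ContDiff ℝ (⊤ : ℕ∞) η)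
    (Ω : Set (ℝ × ℝ × (Fin ρ → ℝ))) (hΩ : IsOpen Ω) :
    (∀ p ∈ Ω, DT ρ r H η η p = (DX ρ η)^[ρ] (Hhat ρ r H η) p) ↔
      (∀ p ∈ Ω, lieBracket ρ (DtVF ρ r H η) (DxVF ρ η) p = 0) := by
  constructor
  · intro h p hp
    rw [bracket_eq H hH hη p]
    have hz : ∀ a : Fin ρ, (if (a:ℕ)+1 < ρ then (0:ℝ)
        else DT ρ r H η η p - (DX ρ η)^[ρ] (Hhat ρ r H η) p) = 0 := by
      intro a; split_ifs with h'
      · rfl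
      · rw [h p hp]; exact sub_self _
    simp only [hz]
    rfl
  · intro h p hp
    have hb := h p hp
    rw [bracket_eq H hH hη p] at hb
    have h3 := congrArg
      (fun v : ℝ × ℝ × (Fin ρ → ℝ) => v.2.2 ⟨ρ - 1, Nat.sub_lt hρ Nat.one_pos⟩) hb
    have hc : ¬ ((ρ - 1 : ℕ) + 1 < ρ) := by omega
    simp only [if_neg hc] at h3
    have h0 : ((0 : ℝ × ℝ × (Fin ρ → ℝ)).2.2 ⟨ρ - 1, Nat.sub_lt hρ Nat.one_pos⟩) = 0 := rfl
    rw [h0] at h3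
    exact sub_eq_zero.1 h3
end
end

section
/- Let F = F(t,x,φ) be an ansatz on I × J × W (so the ρ×ρ matrix Φ with entries Φ^{ab} = ∂_{φᵇ}∂ₓ^{a−1}F is invertible everywhere) and define H̃(t,x,φ) := H(t, x, F, ∂ₓF, …, ∂ₓ^r F) and Gᵃ := Σ_b (Φ^{-1})^{ab} ∂ₓ^{b−1}(H̃ − ∂ₜF). Let φ : I → W be differentiable and set u(t,x) := F(t, x, φ(t)). Then u solves E on I × J if and only if dφᵃ/dt(t) = Gᵃ(t, x, φ(t)) for all (t,x) ∈ I × J and a = 1, …, ρ. In particular, if the ansatz reduces E (each Gᵃ is independent of x) and φ solves the reduced system dφᵃ/dt = Gᵃ(t, φ(t)), then u solves E. -/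
noncomputable section

/-- `u` solves the evolution equation `uₜ = H(t, x, u, ∂ₓu, …, ∂ₓ^r u)` on the set `s`. -/
def SolvesE (r : ℕ) (H : ℝ × ℝ × (Fin (r + 1) → ℝ) → ℝ) (u : ℝ → ℝ → ℝ)
    (s : Set (ℝ × ℝ)) : Prop :=
  ∀ q ∈ s, deriv (fun t => u t q.2) q.1
    = H (q.1, q.2, fun i => deriv^[(i : ℕ)] (u q.1) q.2)

/-- `u` is `Q`-invariant: `∂ₓ^ρ u = η̌(t, x, u, ∂ₓu, …, ∂ₓ^{ρ-1}u)` on the set `s`. -/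
def QInvariant (ρ : ℕ) (η : ℝ × ℝ × (Fin ρ → ℝ) → ℝ) (u : ℝ → ℝ → ℝ)
    (s : Set (ℝ × ℝ)) : Prop :=
  ∀ q ∈ s, deriv^[ρ] (u q.1) q.2 = η (q.1, q.2, fun a => deriv^[(a : ℕ)] (u q.1) q.2)

/-- The Jacobian-type matrix with entries `∂_{κ_b} ∂ₓ^{a-1} f` (indices `a, b = 1, …, ρ`),
evaluated at `p = (t, x, κ)`. -/
def famJac (ρ : ℕ) (f : ℝ × ℝ × (Fin ρ → ℝ) → ℝ) (p : ℝ × ℝ × (Fin ρ → ℝ)) :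
    Matrix (Fin ρ) (Fin ρ) ℝ :=
  Matrix.of fun a b =>
    deriv (fun s => deriv^[(a : ℕ)] (fun y => f (p.1, y, Function.update p.2.2 b s)) p.2.1)
      (p.2.2 b)

/-- `H̃(t,x,φ) = H(t, x, F, ∂ₓF, …, ∂ₓ^r F)`. -/
def tildeH (ρ r : ℕ) (H : ℝ × ℝ × (Fin (r + 1) → ℝ) → ℝ)
    (F : ℝ × ℝ × (Fin ρ → ℝ) → ℝ) (p : ℝ × ℝ × (Fin ρ → ℝ)) : ℝ :=
  H (p.1, p.2.1, fun i => deriv^[(i : ℕ)] (fun x => F (p.1, x, p.2.2)) p.2.1)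

/-- The right-hand sides `Gᵃ = Σ_b (Φ⁻¹)^{ab} ∂ₓ^{b-1}(H̃ − ∂ₜF)` of the reduced system. -/
def redRHS (ρ r : ℕ) (H : ℝ × ℝ × (Fin (r + 1) → ℝ) → ℝ)
    (F : ℝ × ℝ × (Fin ρ → ℝ) → ℝ) (a : Fin ρ) (p : ℝ × ℝ × (Fin ρ → ℝ)) : ℝ :=
  ∑ b : Fin ρ, (famJac ρ F p)⁻¹ a b *
    deriv^[(b : ℕ)]
      (fun x => tildeH ρ r H F (p.1, x, p.2.2) - deriv (fun s => F (s, x, p.2.2)) p.1)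
      p.2.1

namespace AnsatzAux

open Filter Topology ContDiff

abbrev Ph (ρ : ℕ) := ℝ × ℝ × (Fin ρ → ℝ)

variable {ρ : ℕ}

def Dv (v : Ph ρ) (f : Ph ρ → ℝ) (p : Ph ρ) : ℝ := fderiv ℝ f p v

def ex : Ph ρ := (0, 1, 0)
def et : Ph ρ := (1, 0, 0)
def eb (b : Fin ρ) : Ph ρ := (0, 0, Pi.single b 1)

theorem Dv_contDiffOn {f : Ph ρ → ℝ} {U : Set (Ph ρ)} (hU : IsOpen U)
    (hf : ContDiffOn ℝ ∞ f U) (v : Ph ρ) :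
    ContDiffOn ℝ ∞ (Dv v f) U :=
  (hf.fderiv_of_isOpen hU (le_of_eq rfl)).clm_apply contDiffOn_const

theorem one_le_inftop : (1 : WithTop ℕ∞) ≤ ∞ := by exact_mod_cast le_top

theorem hasDerivAt_slice {f : Ph ρ → ℝ} {U : Set (Ph ρ)} (hU : IsOpen U)
    (hf : ContDiffOn ℝ ∞ f U) {p : Ph ρ} (hp : p ∈ U) {c : ℝ → Ph ρ}
    {v : Ph ρ} {s : ℝ} (hc : HasDerivAt c v s) (hcs : c s = p) :
    HasDerivAt (fun s' => f (c s')) (Dv v f p) s := by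
  have hd : DifferentiableAt ℝ f p :=
    (hf.contDiffAt (hU.mem_nhds hp)).differentiableAt (by simp)
  subst hcs
  exact hd.hasFDerivAt.comp_hasDerivAt s hc

theorem hasDerivAt_curve_x (t x : ℝ) (w : Fin ρ → ℝ) :
    HasDerivAt (fun x' : ℝ => ((t, x', w) : Ph ρ)) (ex : Ph ρ) x :=
  (hasDerivAt_const x t).prodMk ((hasDerivAt_id x).prodMk (hasDerivAt_const x w))

theorem hasDerivAt_curve_t (t x : ℝ) (w : Fin ρ → ℝ) :
    HasDerivAt (fun t' : ℝ => ((t', x, w) : Ph ρ)) (et : Ph ρ) t :=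
  (hasDerivAt_id t).prodMk ((hasDerivAt_const t x).prodMk (hasDerivAt_const t w))

theorem hasDerivAt_update (w : Fin ρ → ℝ) (b : Fin ρ) (s : ℝ) :
    HasDerivAt (fun s' => Function.update w b s') (Pi.single b 1) s := by
  rw [hasDerivAt_pi]
  intro i
  rcases eq_or_ne i b with h | h
  · subst h
    simpa [Function.update_apply] using hasDerivAt_id' s
  · simpa [Function.update_apply, h, Pi.single_apply] using hasDerivAt_const s (w i)

theorem hasDerivAt_curve_b (t x : ℝ) (w : Fin ρ → ℝ) (b : Fin ρ) (s : ℝ) :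
    HasDerivAt (fun s' : ℝ => ((t, x, Function.update w b s') : Ph ρ)) (eb b : Ph ρ) s :=
  (hasDerivAt_const s t).prodMk ((hasDerivAt_const s x).prodMk (hasDerivAt_update w b s))

theorem eventuallyEq_iterate_deriv {f g : ℝ → ℝ} {x : ℝ} (h : f =ᶠ[𝓝 x] g) (n : ℕ) :
    deriv^[n] f =ᶠ[𝓝 x] deriv^[n] g := by
  induction n with
  | zero => exact h
  | succ n ih =>
    rw [Function.iterate_succ_apply', Function.iterate_succ_apply']
    exact ih.deriv

theorem Dv_iterate_contDiffOn {f : Ph ρ → ℝ} {U : Set (Ph ρ)} (hU : IsOpen U)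
    (hf : ContDiffOn ℝ ∞ f U) (v : Ph ρ) (n : ℕ) :
    ContDiffOn ℝ ∞ ((Dv v)^[n] f) U := by
  induction n with
  | zero => exact hf
  | succ n ih =>
    rw [Function.iterate_succ_apply']
    exact Dv_contDiffOn hU ih _

/-- Symmetry of second directional derivatives. -/
theorem Dv_comm {f : Ph ρ → ℝ} {U : Set (Ph ρ)} (hU : IsOpen U)
    (hf : ContDiffOn ℝ ∞ f U) {p : Ph ρ} (hp : p ∈ U) (v w : Ph ρ) :
    Dv v (Dv w f) p = Dv w (Dv v f) p := by
  have hf' : ContDiffOn ℝ ∞ (fderiv ℝ f) U := hf.fderiv_of_isOpen hU (le_of_eq rfl)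
  have hdf : DifferentiableAt ℝ (fderiv ℝ f) p :=
    (hf'.contDiffAt (hU.mem_nhds hp)).differentiableAt (by simp)
  have hsymm : ∀ v w : Ph ρ, fderiv ℝ (fderiv ℝ f) p v w = fderiv ℝ (fderiv ℝ f) p w v := by
    intro v w
    refine second_derivative_symmetric_of_eventually (f := f) ?_ hdf.hasFDerivAt v w
    filter_upwards [hU.mem_nhds hp] with q hq
    exact ((hf.contDiffAt (hU.mem_nhds hq)).differentiableAt (by simp)).hasFDerivAt
  have key : ∀ v w : Ph ρ, Dv v (Dv w f) p = fderiv ℝ (fderiv ℝ f) p v w := by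
    intro v w
    show fderiv ℝ (fun q => fderiv ℝ f q w) p v = _
    rw [fderiv_clm_apply hdf (differentiableAt_const w)]
    simp
  rw [key, key, hsymm]

/-- Iterated `x`-derivative of a slice equals iterated directional derivative. -/
theorem iterate_deriv_slice {U : Set (Ph ρ)} (hU : IsOpen U) :
    ∀ (n : ℕ) (f : Ph ρ → ℝ), ContDiffOn ℝ ∞ f U → ∀ p ∈ U,
      deriv^[n] (fun x' => f (p.1, x', p.2.2)) p.2.1 = (Dv ex)^[n] f p := by
  intro n
  induction n with
  | zero => intro f hf p hp; rfl
  | succ n ih =>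
    intro f hf p hp
    rw [Function.iterate_succ_apply]
    have hev : deriv (fun x' => f (p.1, x', p.2.2)) =ᶠ[𝓝 p.2.1]
        (fun x' => Dv ex f (p.1, x', p.2.2)) := by
      have hop : IsOpen {x' : ℝ | ((p.1, x', p.2.2) : Ph ρ) ∈ U} :=
        hU.preimage (by fun_prop)
      filter_upwards [hop.mem_nhds (by simpa using hp)] with x' hx'
      exact (hasDerivAt_slice hU hf hx' (hasDerivAt_curve_x p.1 x' p.2.2) rfl).deriv
    calc deriv^[n] (deriv fun x' => f (p.1, x', p.2.2)) p.2.1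
        = deriv^[n] (fun x' => Dv ex f (p.1, x', p.2.2)) p.2.1 :=
          (eventuallyEq_iterate_deriv hev n).eq_of_nhds
      _ = (Dv ex)^[n] (Dv ex f) p := ih _ (Dv_contDiffOn hU hf _) p hp
      _ = (Dv ex)^[n + 1] f p := by rw [← Function.iterate_succ_apply]

theorem deriv_comp_proj {φ : ℝ → Fin ρ → ℝ} {t : ℝ} (hφ : DifferentiableAt ℝ φ t)
    (a : Fin ρ) : deriv (fun s => φ s a) t = deriv φ t a :=
  ((hasDerivAt_pi.1 hφ.hasDerivAt) a).deriv

theorem vec_sum (v : Fin ρ → ℝ) :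
    (∑ b, v b • (eb b : Ph ρ)) = ((0, 0, v) : Ph ρ) := by
  refine Prod.ext ?_ (Prod.ext ?_ ?_)
  · rw [Prod.fst_sum]; simp [eb]
  · rw [Prod.snd_sum, Prod.fst_sum]; simp [eb]
  · rw [Prod.snd_sum, Prod.snd_sum]
    funext i
    rw [Finset.sum_apply]
    simp [eb, Pi.single_apply]

theorem vec_decomp (v : Fin ρ → ℝ) :
    ((1, 0, v) : Ph ρ) = et + ∑ b, v b • (eb b : Ph ρ) := by
  rw [vec_sum]
  simp [et, Prod.ext_iff]

theorem hasDerivAt_comp_phi {f : Ph ρ → ℝ} {U : Set (Ph ρ)} (hU : IsOpen U)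
    (hf : ContDiffOn ℝ ∞ f U) {φ : ℝ → Fin ρ → ℝ} {t x : ℝ}
    (hp : ((t, x, φ t) : Ph ρ) ∈ U) (hφ : DifferentiableAt ℝ φ t) :
    HasDerivAt (fun s => f (s, x, φ s))
      (Dv et f (t, x, φ t) + ∑ b, deriv φ t b * Dv (eb b) f (t, x, φ t)) t := by
  have hc : HasDerivAt (fun s => ((s, x, φ s) : Ph ρ)) ((1, 0, deriv φ t) : Ph ρ) t :=
    (hasDerivAt_id t).prodMk ((hasDerivAt_const t x).prodMk hφ.hasDerivAt)
  have h := hasDerivAt_slice hU hf hp hc rfl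
  have heq : Dv ((1, 0, deriv φ t) : Ph ρ) f (t, x, φ t)
      = Dv et f (t, x, φ t) + ∑ b, deriv φ t b * Dv (eb b) f (t, x, φ t) := by
    show fderiv ℝ f (t, x, φ t) ((1, 0, deriv φ t) : Ph ρ) = _
    rw [vec_decomp (deriv φ t), map_add, map_sum]
    simp only [map_smul, smul_eq_mul]
    rfl
  rwa [heq] at h

theorem inv_solve {n : ℕ} {M : Matrix (Fin n) (Fin n) ℝ} (hd : M.det ≠ 0) (v k : Fin n → ℝ) :
    (∀ a, ∑ b, M a b * v b = k a) ↔ (∀ a, ∑ b, M⁻¹ a b * k b = v a) := by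
  have hu : IsUnit M.det := isUnit_iff_ne_zero.2 hd
  have e1 : ∀ (A : Matrix (Fin n) (Fin n) ℝ) (u r : Fin n → ℝ),
      (∀ a, ∑ b, A a b * u b = r a) ↔ A.mulVec u = r := by
    intro A u r
    constructor
    · intro h; funext a; simpa [Matrix.mulVec, dotProduct] using h a
    · intro h a; simpa [Matrix.mulVec, dotProduct] using congrFun h a
  rw [e1, e1]
  constructor
  · intro h
    rw [← h, Matrix.mulVec_mulVec, Matrix.nonsing_inv_mul M hu, Matrix.one_mulVec]
  · intro h
    rw [← h, Matrix.mulVec_mulVec, Matrix.mul_nonsing_inv M hu, Matrix.one_mulVec]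

/-- The entries of `famJac` as mixed directional derivatives. -/
theorem famJac_entry {F : Ph ρ → ℝ} {I J : Set ℝ} {W : Set (Fin ρ → ℝ)}
    (hI : IsOpen I) (hJ : IsOpen J) (hW : IsOpen W)
    (hF : ContDiffOn ℝ ∞ F (I ×ˢ J ×ˢ W)) {t x : ℝ} {w : Fin ρ → ℝ}
    (ht : t ∈ I) (hx : x ∈ J) (hw : w ∈ W) (a b : Fin ρ) :
    famJac ρ F (t, x, w) a b = Dv (eb b) ((Dv ex)^[(a : ℕ)] F) (t, x, w) := by
  have hU : IsOpen (I ×ˢ J ×ˢ W) := hI.prod (hJ.prod hW)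
  have hG : ContDiffOn ℝ ∞ ((Dv ex)^[(a : ℕ)] F) (I ×ˢ J ×ˢ W) :=
    Dv_iterate_contDiffOn hU hF ex (a : ℕ)
  have hmem : ∀ᶠ s in 𝓝 (w b), Function.update w b s ∈ W := by
    have hcont : ContinuousAt (fun s => Function.update w b s) (w b) :=
      (hasDerivAt_update w b (w b)).differentiableAt.continuousAt
    have hw' : W ∈ 𝓝 (Function.update w b (w b)) := by
      rw [Function.update_eq_self]; exact hW.mem_nhds hw
    exact hcont hw'
  have hev : (fun s => deriv^[(a : ℕ)] (fun y => F (t, y, Function.update w b s)) x)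
      =ᶠ[𝓝 (w b)] (fun s => (Dv ex)^[(a : ℕ)] F (t, x, Function.update w b s)) := by
    filter_upwards [hmem] with s hs
    exact iterate_deriv_slice hU (a : ℕ) F hF (t, x, Function.update w b s) ⟨ht, hx, hs⟩
  have h1 : famJac ρ F (t, x, w) a b
      = deriv (fun s => (Dv ex)^[(a : ℕ)] F (t, x, Function.update w b s)) (w b) :=
    hev.deriv_eq
  rw [h1]
  exact (hasDerivAt_slice hU hG ⟨ht, hx, hw⟩ (hasDerivAt_curve_b t x w b (w b))
    (by rw [Function.update_eq_self])).deriv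

end AnsatzAux

open AnsatzAux Filter Topology ContDiff in
/-- for an ansatz `F` (with `det Φ ≠ 0`), the function `u(t,x) = F(t,x,φ(t))`
solves `E` on `I × J` iff `φᵃ'(t) = Gᵃ(t, x, φ(t))` for all `(t,x) ∈ I × J`.  In particular,
if the ansatz reduces `E` (each `Gᵃ` independent of `x`) and `φ` solves the reduced system,
then `u` solves `E`. -/
theorem substitution_of_ansatz_iff_reduced_system
    (ρ r : ℕ) (hρ : 1 ≤ ρ) (hr : 1 ≤ r)
    (H : ℝ × ℝ × (Fin (r + 1) → ℝ) → ℝ) (hH : ContDiff ℝ (⊤ : ℕ∞) H)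
    (I J : Set ℝ) (W : Set (Fin ρ → ℝ))
    (hI : IsOpen I) (hIc : I.OrdConnected) (hJ : IsOpen J) (hJc : J.OrdConnected)
    (hW : IsOpen W)
    (F : ℝ × ℝ × (Fin ρ → ℝ) → ℝ) (hF : ContDiffOn ℝ (⊤ : ℕ∞) F (I ×ˢ J ×ˢ W))
    (hjac : ∀ p ∈ I ×ˢ J ×ˢ W, (famJac ρ F p).det ≠ 0)
    (φ : ℝ → Fin ρ → ℝ) (hφ : ∀ t ∈ I, DifferentiableAt ℝ φ t)
    (hφW : ∀ t ∈ I, φ t ∈ W) :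
    (SolvesE r H (fun t x => F (t, x, φ t)) (I ×ˢ J) ↔
      ∀ t ∈ I, ∀ x ∈ J, ∀ a : Fin ρ,
        deriv (fun s => φ s a) t = redRHS ρ r H F a (t, x, φ t)) ∧
    ((∀ a : Fin ρ, ∀ t ∈ I, ∀ x₁ ∈ J, ∀ x₂ ∈ J, ∀ w ∈ W,
        redRHS ρ r H F a (t, x₁, w) = redRHS ρ r H F a (t, x₂, w)) →
      (∀ t ∈ I, ∀ x ∈ J, ∀ a : Fin ρ,
        deriv (fun s => φ s a) t = redRHS ρ r H F a (t, x, φ t)) →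
      SolvesE r H (fun t x => F (t, x, φ t)) (I ×ˢ J)) := by
  have hF' : ContDiffOn ℝ ∞ F (I ×ˢ J ×ˢ W) := hF.of_le (by simp)
  have hU : IsOpen (I ×ˢ J ×ˢ W) := hI.prod (hJ.prod hW)
  have main : SolvesE r H (fun t x => F (t, x, φ t)) (I ×ˢ J) ↔
      ∀ t ∈ I, ∀ x ∈ J, ∀ a : Fin ρ,
        deriv (fun s => φ s a) t = redRHS ρ r H F a (t, x, φ t) := by
    constructor
    · intro hsol t ht x hx a
      have hwW : φ t ∈ W := hφW t ht
      have P : ∀ (n : ℕ), ∀ x' ∈ J,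
          ∑ b, Dv (eb b) ((Dv ex)^[n] F) (t, x', φ t) * deriv φ t b
            = deriv^[n] (fun y => tildeH ρ r H F (t, y, φ t)
                - deriv (fun s => F (s, y, φ t)) t) x' := by
        intro n
        induction n with
        | zero =>
          intro x' hx'
          have hp : ((t, x', φ t) : Ph ρ) ∈ I ×ˢ J ×ˢ W := ⟨ht, hx', hwW⟩
          have h1 := (hasDerivAt_comp_phi hU hF' hp (hφ t ht)).deriv
          have h2 : deriv (fun s => F (s, x', φ s)) t = tildeH ρ r H F (t, x', φ t) :=
            hsol (t, x') ⟨ht, hx'⟩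
          have h3 : deriv (fun s => F (s, x', φ t)) t = Dv et F (t, x', φ t) :=
            (hasDerivAt_slice hU hF' hp (hasDerivAt_curve_t t x' (φ t)) rfl).deriv
          simp only [Function.iterate_zero, id_eq]
          rw [h3, ← h2, h1]
          rw [Finset.sum_congr rfl fun b _ =>
            mul_comm (Dv (eb b) F (t, x', φ t)) (deriv φ t b)]
          ring
        | succ n ih =>
          intro x' hx'
          have hp : ((t, x', φ t) : Ph ρ) ∈ I ×ˢ J ×ˢ W := ⟨ht, hx', hwW⟩
          have hG : ContDiffOn ℝ ∞ ((Dv ex)^[n] F) (I ×ˢ J ×ˢ W) :=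
            Dv_iterate_contDiffOn hU hF' ex n
          rw [Function.iterate_succ_apply' deriv n]
          have hev : (fun y => ∑ b, Dv (eb b) ((Dv ex)^[n] F) (t, y, φ t) * deriv φ t b)
              =ᶠ[𝓝 x'] deriv^[n] (fun y => tildeH ρ r H F (t, y, φ t)
                - deriv (fun s => F (s, y, φ t)) t) := by
            filter_upwards [hJ.mem_nhds hx'] with y hy
            exact ih y hy
          rw [← hev.deriv_eq]
          have hder : HasDerivAt
              (fun y => ∑ b, Dv (eb b) ((Dv ex)^[n] F) (t, y, φ t) * deriv φ t b)
              (∑ b, Dv ex (Dv (eb b) ((Dv ex)^[n] F)) (t, x', φ t) * deriv φ t b) x' := by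
            apply HasDerivAt.fun_sum
            intro b _
            exact (hasDerivAt_slice hU (Dv_contDiffOn hU hG (eb b)) hp
              (hasDerivAt_curve_x t x' (φ t)) rfl).mul_const _
          rw [hder.deriv]
          refine Finset.sum_congr rfl fun b _ => ?_
          rw [Function.iterate_succ_apply' (Dv ex) n, Dv_comm hU hG hp (eb b) ex]
      have hM : ∀ a' : Fin ρ, ∑ b, famJac ρ F (t, x, φ t) a' b * deriv φ t b
          = deriv^[(a' : ℕ)] (fun y => tildeH ρ r H F (t, y, φ t)
              - deriv (fun s => F (s, y, φ t)) t) x := by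
        intro a'
        rw [← P (a' : ℕ) x hx]
        exact Finset.sum_congr rfl fun b _ => by
          rw [famJac_entry hI hJ hW hF' ht hx hwW a' b]
      have hinv := (inv_solve (hjac (t, x, φ t) ⟨ht, hx, hwW⟩) (deriv φ t)
        (fun b => deriv^[(b : ℕ)] (fun y => tildeH ρ r H F (t, y, φ t)
          - deriv (fun s => F (s, y, φ t)) t) x)).1 hM a
      rw [deriv_comp_proj (hφ t ht) a]
      exact hinv.symm
    · intro hred q hq
      obtain ⟨t, x⟩ := q
      obtain ⟨ht, hx⟩ := hq
      have hwW : φ t ∈ W := hφW t ht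
      have hp : ((t, x, φ t) : Ph ρ) ∈ I ×ˢ J ×ˢ W := ⟨ht, hx, hwW⟩
      have hv : ∀ a : Fin ρ, ∑ b, (famJac ρ F (t, x, φ t))⁻¹ a b *
          deriv^[(b : ℕ)] (fun y => tildeH ρ r H F (t, y, φ t)
            - deriv (fun s => F (s, y, φ t)) t) x = deriv φ t a := by
        intro a
        have h := hred t ht x hx a
        rw [deriv_comp_proj (hφ t ht) a] at h
        exact h.symm
      have hM := (inv_solve (hjac (t, x, φ t) hp) (deriv φ t)
        (fun b => deriv^[(b : ℕ)] (fun y => tildeH ρ r H F (t, y, φ t)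
          - deriv (fun s => F (s, y, φ t)) t) x)).2 hv
      have h0 := hM ⟨0, hρ⟩
      have h3 : deriv (fun s => F (s, x, φ t)) t = Dv et F (t, x, φ t) :=
        (hasDerivAt_slice hU hF' hp (hasDerivAt_curve_t t x (φ t)) rfl).deriv
      have h0' : ∑ b, Dv (eb b) F (t, x, φ t) * deriv φ t b
          = tildeH ρ r H F (t, x, φ t) - Dv et F (t, x, φ t) := by
        calc ∑ b, Dv (eb b) F (t, x, φ t) * deriv φ t b
            = ∑ b, famJac ρ F (t, x, φ t) ⟨0, hρ⟩ b * deriv φ t b :=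
              Finset.sum_congr rfl fun b _ => by
                rw [famJac_entry hI hJ hW hF' ht hx hwW ⟨0, hρ⟩ b]; rfl
          _ = deriv^[((⟨0, hρ⟩ : Fin ρ) : ℕ)] (fun y => tildeH ρ r H F (t, y, φ t)
                - deriv (fun s => F (s, y, φ t)) t) x := h0
          _ = tildeH ρ r H F (t, x, φ t) - Dv et F (t, x, φ t) := by
              show tildeH ρ r H F (t, x, φ t) - deriv (fun s => F (s, x, φ t)) t = _
              rw [h3]
      have h1 := (hasDerivAt_comp_phi hU hF' hp (hφ t ht)).deriv
      show deriv (fun s => F (s, x, φ s)) t = tildeH ρ r H F (t, x, φ t)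
      rw [h1]
      rw [Finset.sum_congr rfl fun b _ =>
        mul_comm (deriv φ t b) (Dv (eb b) F (t, x, φ t))]
      rw [h0']
      ring
  exact ⟨main, fun _ h2 => main.2 h2⟩
end
end
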